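/- Define C_α for α ∈ (0,1)∖{1/2} as follows. For α ∈ (1/2,1), C_α = (2α − 1)/(√3 − 1 + 2α). For α ∈ (0,1/2), let λ_α ∈ (0,1) be the unique solution of λ·F_α'(λ) = F_α(λ), set σ_α = λ_α·√(F_α''(λ_α)/F_α(λ_α)) and r_α = (1 + F_α(−λ_α)/F_α(λ_α))/2 (the total mass of the even integers under the tilted distribution with generating function z ↦ F_α(λ_α z)/F_α(λ_α)), and set C_α = (σ_α² + r_α)/(2σ_α). Then C_α ~ (2/√3)·(α − 1/2) as α ↓ 1/2, and C_α ~ (3^{3/4}/8)·(1/2 − α)^{−1/2} as α ↑ 1/2. -/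

import Mathlib

open Real Filter Set Asymptotics

/-- The generating function `F_α(z) = (2α - 1 + √3 z + (1-z)^{3/2})/(2α - 1 + √3)`,
for real `z ∈ [-1, 1]` (with `(1-z)^{3/2}` the real power). -/
noncomputable def Falpha (α : ℝ) (z : ℝ) : ℝ :=
  (2 * α - 1 + Real.sqrt 3 * z + (1 - z) ^ ((3 : ℝ) / 2))
    / (2 * α - 1 + Real.sqrt 3)

open Topology

/-!
Writing `λ = 1 - s²` with `s ∈ (0, 1)`, the equation `λ F_α'(λ) = F_α(λ)` becomes the cubic
`s³ - 3s = 2(2α - 1)`, and with its help `F_α(λ)`, `F_α''(λ)` and `F_α(-λ)` are explicit in `s`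
alone. Hence `√s · C_α` is a function of `s` that is continuous at `s = 0` with value `3^{1/4}/4`.
As `α ↑ 1/2` the cubic `s (3 - s²) = 4 (1/2 - α)` forces `s ~ (4/3)(1/2 - α)`, which gives the
subcritical asymptotics. The supercritical one is just `√3 / (√3 - 1 + 2α) → 1`.
-/

lemma three_halves_lt_sqrt_three : (3 : ℝ) / 2 < √3 :=
  (Real.lt_sqrt (by norm_num)).2 (by norm_num)

lemma hasDerivAt_Falpha (α x : ℝ) :
    HasDerivAt (Falpha α) ((√3 - 3 / 2 * √(1 - x)) / (2 * α - 1 + √3)) x := by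
  have hpow := ((hasDerivAt_id x).const_sub 1).rpow_const (p := (3 : ℝ) / 2) (Or.inr (by norm_num))
  have hlin := ((hasDerivAt_id x).const_mul √3).const_add (2 * α - 1)
  refine ((hlin.add hpow).div_const (2 * α - 1 + √3)).congr_deriv ?_
  rw [show (3 : ℝ) / 2 - 1 = 1 / 2 by norm_num, ← Real.sqrt_eq_rpow]
  simp only [id, mul_one]
  ring

lemma deriv_deriv_Falpha (α : ℝ) {x : ℝ} (hx : x < 1) :
    deriv (deriv (Falpha α)) x = 3 / (4 * √(1 - x)) / (2 * α - 1 + √3) := by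
  have hderiv : deriv (Falpha α) =ᶠ[𝓝 x]
      fun z => (√3 - 3 / 2 * √(1 - z)) / (2 * α - 1 + √3) := by
    filter_upwards [Iio_mem_nhds hx] with z hz using (hasDerivAt_Falpha α z).deriv
  have hsqrt : HasDerivAt (fun z => √(1 - z)) (1 / (2 * √(1 - x)) * -1) x :=
    (Real.hasDerivAt_sqrt (by linarith)).comp x ((hasDerivAt_id x).const_sub 1)
  rw [hderiv.deriv_eq, (((hsqrt.const_mul (3 / 2)).const_sub √3).div_const _).deriv]
  ring

section OneSubSq

variable (α : ℝ) {s : ℝ}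

lemma Falpha_one_sub_sq (hs : 0 ≤ s) :
    Falpha α (1 - s ^ 2) = (2 * α - 1 + √3 * (1 - s ^ 2) + s ^ 3) / (2 * α - 1 + √3) := by
  rw [Falpha, sub_sub_cancel, ← Real.rpow_natCast, ← Real.rpow_mul hs]
  norm_num

lemma deriv_Falpha_one_sub_sq (hs : 0 ≤ s) :
    deriv (Falpha α) (1 - s ^ 2) = (√3 - 3 / 2 * s) / (2 * α - 1 + √3) := by
  rw [(hasDerivAt_Falpha α _).deriv, sub_sub_cancel, Real.sqrt_sq hs]

lemma deriv_deriv_Falpha_one_sub_sq (hs : 0 < s) :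
    deriv (deriv (Falpha α)) (1 - s ^ 2) = 3 / (4 * s) / (2 * α - 1 + √3) := by
  rw [deriv_deriv_Falpha α (by nlinarith), sub_sub_cancel, Real.sqrt_sq hs.le]

end OneSubSq

lemma cubic_of_fixedPoint {α s : ℝ} (hD : 2 * α - 1 + √3 ≠ 0) (hs : 0 ≤ s)
    (hfix : (1 - s ^ 2) * deriv (Falpha α) (1 - s ^ 2) = Falpha α (1 - s ^ 2)) :
    s ^ 3 - 3 * s = 2 * (2 * α - 1) := by
  rw [deriv_Falpha_one_sub_sq α hs, Falpha_one_sub_sq α hs, mul_div_assoc',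
    div_left_inj' hD] at hfix
  linear_combination 2 * hfix

noncomputable def tiltedSigma (α l : ℝ) : ℝ := l * √(deriv (deriv (Falpha α)) l / Falpha α l)

noncomputable def tiltedEvenMass (α l : ℝ) : ℝ := (1 + Falpha α (-l) / Falpha α l) / 2

/-- In terms of `s = √(1 - λ_α)`: `σ_α² = sigmaSqParam s / s`, `r_α = evenMassParam s` and
`C_α = scalingParam s / √s`. -/
noncomputable def sigmaSqParam (s : ℝ) : ℝ := 3 * (1 - s ^ 2) / (4 * (√3 - 3 / 2 * s))

noncomputable def evenMassParam (s : ℝ) : ℝ :=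
  (1 + ((s ^ 3 - 3 * s) / 2 - √3 * (1 - s ^ 2) + (2 - s ^ 2) ^ ((3 : ℝ) / 2)) /
    ((1 - s ^ 2) * (√3 - 3 / 2 * s))) / 2

noncomputable def scalingParam (s : ℝ) : ℝ :=
  (sigmaSqParam s + evenMassParam s * s) / (2 * √(sigmaSqParam s))

lemma sigmaSqParam_pos {s : ℝ} (hs : s ∈ Ioo 0 1) : 0 < sigmaSqParam s := by
  have := three_halves_lt_sqrt_three
  obtain ⟨hs0, hs1⟩ := hs
  apply div_pos <;> nlinarith

lemma sqrt_div_add_div_sqrt_div {h s : ℝ} (hh : 0 < h) (hs : 0 < s) (r : ℝ) :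
    (√(h / s) ^ 2 + r) / (2 * √(h / s)) = (h + r * s) / (2 * √h) / √s := by
  have hsqrt_s : √s ^ 2 = s := Real.sq_sqrt hs.le
  have : 0 < √s := Real.sqrt_pos.2 hs
  have : 0 < √h := Real.sqrt_pos.2 hh
  rw [Real.sq_sqrt (div_pos hh hs).le, Real.sqrt_div' _ hs.le]
  field_simp
  rw [hsqrt_s]
  ring

section FixedPoint

variable {α s : ℝ} (hcubic : s ^ 3 - 3 * s = 2 * (2 * α - 1))
include hcubic

lemma Falpha_one_sub_sq_of_cubic (hs : 0 ≤ s) :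
    Falpha α (1 - s ^ 2) = (1 - s ^ 2) * (√3 - 3 / 2 * s) / (2 * α - 1 + √3) := by
  rw [Falpha_one_sub_sq α hs]
  congr 1
  linear_combination (-1 / 2) * hcubic

lemma Falpha_neg_one_sub_sq_of_cubic :
    Falpha α (-(1 - s ^ 2)) =
      ((s ^ 3 - 3 * s) / 2 - √3 * (1 - s ^ 2) + (2 - s ^ 2) ^ ((3 : ℝ) / 2)) /
        (2 * α - 1 + √3) := by
  rw [Falpha, show 1 - -(1 - s ^ 2) = 2 - s ^ 2 by ring]
  congr 1
  linear_combination (-1 / 2) * hcubic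

variable (hD : 2 * α - 1 + √3 ≠ 0) (hs : s ∈ Ioo 0 1)
include hD hs

lemma tiltedSigma_one_sub_sq : tiltedSigma α (1 - s ^ 2) = √(sigmaSqParam s / s) := by
  have := three_halves_lt_sqrt_three
  obtain ⟨hs0, hs1⟩ := hs
  have hl : 0 ≤ 1 - s ^ 2 := by nlinarith
  have hl' : 1 - s ^ 2 ≠ 0 := by nlinarith
  have hN : √3 - 3 / 2 * s ≠ 0 := by nlinarith
  rw [tiltedSigma, deriv_deriv_Falpha_one_sub_sq α hs0, Falpha_one_sub_sq_of_cubic hcubic hs0.le,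
    ← Real.sqrt_sq hl, ← Real.sqrt_mul (sq_nonneg _), Real.sqrt_sq hl, sigmaSqParam]
  congr 1
  field_simp

lemma tiltedEvenMass_one_sub_sq : tiltedEvenMass α (1 - s ^ 2) = evenMassParam s := by
  rw [tiltedEvenMass, Falpha_neg_one_sub_sq_of_cubic hcubic,
    Falpha_one_sub_sq_of_cubic hcubic hs.1.le, div_div_div_cancel_right₀ hD, evenMassParam]

lemma scalingConstant_one_sub_sq :
    (tiltedSigma α (1 - s ^ 2) ^ 2 + tiltedEvenMass α (1 - s ^ 2)) /
        (2 * tiltedSigma α (1 - s ^ 2)) = scalingParam s / √s := by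
  rw [tiltedSigma_one_sub_sq hcubic hD hs, tiltedEvenMass_one_sub_sq hcubic hD hs,
    sqrt_div_add_div_sqrt_div (sigmaSqParam_pos hs) hs.1, scalingParam]

end FixedPoint

lemma sigmaSqParam_zero : sigmaSqParam 0 = √3 / 4 := by
  have : (0 : ℝ) < √3 := by positivity
  rw [sigmaSqParam]
  field_simp
  linear_combination (-2) * Real.mul_self_sqrt (show (0 : ℝ) ≤ 3 by norm_num)

lemma scalingParam_zero : scalingParam 0 = √(√3) / 4 := by
  have h3 : √(√3) ^ 2 = √3 := Real.sq_sqrt (by positivity)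
  have : 0 < √(√3) := by positivity
  rw [scalingParam, sigmaSqParam_zero, Real.sqrt_div' _ (by norm_num),
    show √(4 : ℝ) = 2 by rw [show (4 : ℝ) = 2 ^ 2 by norm_num, Real.sqrt_sq (by norm_num)],
    mul_zero, add_zero]
  field_simp
  exact h3.symm

lemma continuousAt_scalingParam_zero : ContinuousAt scalingParam 0 := by
  have h3 : (0 : ℝ) < √3 := by positivity
  have hσ : ContinuousAt sigmaSqParam 0 :=
    ContinuousAt.div (by fun_prop) (by fun_prop) (by norm_num)
  have hr : ContinuousAt evenMassParam 0 := by
    refine ((continuousAt_const.add (ContinuousAt.div ?_ (by fun_prop) (by norm_num))).div_const 2)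
    exact (by fun_prop : ContinuousAt (fun s : ℝ => (s ^ 3 - 3 * s) / 2 - √3 * (1 - s ^ 2)) 0).add
      ((by fun_prop : ContinuousAt (fun s : ℝ => 2 - s ^ 2) 0).rpow_const (Or.inr (by norm_num)))
  refine (hσ.add (hr.mul continuousAt_id)).div (continuousAt_const.mul hσ.sqrt) ?_
  rw [sigmaSqParam_zero]
  positivity

lemma three_rpow_three_div_four : (3 : ℝ) ^ ((3 : ℝ) / 4) = √(√3) * √3 := by
  rw [Real.sqrt_eq_rpow, Real.sqrt_eq_rpow, ← Real.rpow_mul (by norm_num),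
    ← Real.rpow_add (by norm_num)]
  norm_num

section NearCritical

variable {s : ℝ → ℝ}
  (hs : ∀ᶠ α in 𝓝[<] (1 / 2), s α ∈ Ioo 0 1 ∧ s α ^ 3 - 3 * s α = 2 * (2 * α - 1))
include hs

lemma tendsto_cubicRoot_zero : Tendsto s (𝓝[<] (1 / 2)) (𝓝 0) := by
  have hlin : Tendsto (fun α : ℝ => 2 * (1 / 2 - α)) (𝓝[<] (1 / 2)) (𝓝 0) :=
    tendsto_nhdsWithin_of_tendsto_nhds
      (((continuous_const.sub continuous_id).const_mul 2).tendsto' _ _ (by norm_num))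
  refine tendsto_of_tendsto_of_tendsto_of_le_of_le' tendsto_const_nhds hlin ?_ ?_
  · filter_upwards [hs] with α ⟨hsα, _⟩ using hsα.1.le
  · filter_upwards [hs] with α ⟨⟨hs0, hs1⟩, hcubic⟩
    nlinarith [mul_pos (mul_pos hs0 (sub_pos.2 hs1)) (by linarith : 0 < 1 + s α)]

lemma tendsto_div_cubicRoot :
    Tendsto (fun α => (1 / 2 - α) / s α) (𝓝[<] (1 / 2)) (𝓝 (3 / 4)) := by
  have hlim := (((tendsto_cubicRoot_zero hs).pow 2).const_sub 3).div_const 4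
  rw [show ((3 : ℝ) - 0 ^ 2) / 4 = 3 / 4 by norm_num] at hlim
  refine hlim.congr' ?_
  filter_upwards [hs] with α ⟨hsα, hcubic⟩
  rw [eq_div_iff hsα.1.ne']
  linear_combination (-1 / 4) * hcubic

end NearCritical

lemma isEquivalent_of_cubicRoot {C s : ℝ → ℝ}
    (h : ∀ᶠ α in 𝓝[<] (1 / 2), s α ∈ Ioo 0 1 ∧ s α ^ 3 - 3 * s α = 2 * (2 * α - 1) ∧
      C α = scalingParam (s α) / √(s α)) :
    C ~[𝓝[<] (1 / 2)] fun α => (3 : ℝ) ^ ((3 : ℝ) / 4) / 8 * (1 / 2 - α) ^ (-(1 : ℝ) / 2) := by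
  have hs : ∀ᶠ α in 𝓝[<] (1 / 2), s α ∈ Ioo 0 1 ∧ s α ^ 3 - 3 * s α = 2 * (2 * α - 1) :=
    h.mono fun _ hα => ⟨hα.1, hα.2.1⟩
  have hlim : Tendsto (fun α => scalingParam (s α) * √((1 / 2 - α) / s α)) (𝓝[<] (1 / 2))
      (𝓝 ((3 : ℝ) ^ ((3 : ℝ) / 4) / 8)) := by
    rw [show (3 : ℝ) ^ ((3 : ℝ) / 4) / 8 = scalingParam 0 * √(3 / 4) by
      rw [scalingParam_zero, three_rpow_three_div_four, Real.sqrt_div' _ (by norm_num),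
        show (4 : ℝ) = 2 ^ 2 by norm_num, Real.sqrt_sq (by norm_num)]
      ring]
    exact (continuousAt_scalingParam_zero.tendsto.comp (tendsto_cubicRoot_zero hs)).mul
      (tendsto_div_cubicRoot hs).sqrt
  refine (((isEquivalent_const_iff_tendsto (by positivity)).2 hlim).mul
    (IsEquivalent.refl (u := fun α : ℝ => (1 / 2 - α) ^ (-(1 : ℝ) / 2)))).congr_left ?_
  filter_upwards [h, self_mem_nhdsWithin] with α ⟨hsα, _, hC⟩ (hα : α < 1 / 2)
  have hu : 0 < 1 / 2 - α := by linarith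
  have : 0 < √(s α) := Real.sqrt_pos.2 hsα.1
  have : 0 < √(1 / 2 - α) := Real.sqrt_pos.2 hu
  rw [Pi.mul_apply, hC, show -(1 : ℝ) / 2 = -(1 / 2) by norm_num, Real.rpow_neg hu.le,
    ← Real.sqrt_eq_rpow, Real.sqrt_div' _ hsα.1.le]
  generalize √(1 / 2 - α) = t at *
  field_simp

lemma isEquivalent_supercritical :
    (fun α : ℝ => (2 * α - 1) / (√3 - 1 + 2 * α)) ~[𝓝 (1 / 2)]
      fun α => 2 / √3 * (α - 1 / 2) := by
  have h3 : (0 : ℝ) < √3 := by positivity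
  have hden : ContinuousAt (fun α : ℝ => √3 - 1 + 2 * α) (1 / 2) := by fun_prop
  have hden_ne : √3 - 1 + 2 * (1 / 2 : ℝ) ≠ 0 := by norm_num
  have hratio : Tendsto (fun α : ℝ => √3 / (√3 - 1 + 2 * α)) (𝓝 (1 / 2)) (𝓝 1) := by
    have := (tendsto_const_nhds (x := √3)).div hden.tendsto hden_ne
    rwa [show √3 - 1 + 2 * (1 / 2 : ℝ) = √3 by ring, div_self h3.ne'] at this
  refine ((IsEquivalent.refl.mul ((isEquivalent_const_iff_tendsto one_ne_zero).2 hratio)).congr_left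
    ?_).congr_right (Eventually.of_forall fun α => mul_one _)
  filter_upwards [hden.eventually_ne hden_ne] with α hα
  simp only [Pi.mul_apply]
  field_simp

lemma exists_eq_one_sub_sq {l : ℝ} (hl : l ∈ Ioo 0 1) : ∃ s ∈ Ioo (0 : ℝ) 1, l = 1 - s ^ 2 := by
  refine ⟨√(1 - l), ⟨Real.sqrt_pos.2 (by linarith [hl.2]), ?_⟩, ?_⟩
  · rw [Real.sqrt_lt' one_pos]
    linarith [hl.1]
  · rw [Real.sq_sqrt (by linarith [hl.2])]
    ring

/-- Theorem 1.3: the scaling constants `C_α` — equal to `(2α-1)/(√3-1+2α)` for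
`α ∈ (1/2,1)`, and to `(σ_α² + r_α)/(2σ_α)` for `α ∈ (0,1/2)`, where `λ_α ∈ (0,1)`
solves `λ F_α'(λ) = F_α(λ)`, `σ_α = λ_α √(F_α''(λ_α)/F_α(λ_α))` and
`r_α = (1 + F_α(-λ_α)/F_α(λ_α))/2` — satisfy
`C_α ~ (2/√3)(α - 1/2)` as `α ↓ 1/2` and `C_α ~ (3^{3/4}/8)(1/2 - α)^{-1/2}` as
`α ↑ 1/2`. -/
theorem scaling_constants_near_critical (Cmap : ℝ → ℝ)
    (hC_sup : ∀ α ∈ Set.Ioo (1 / 2 : ℝ) 1,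
      Cmap α = (2 * α - 1) / (Real.sqrt 3 - 1 + 2 * α))
    (hC_sub : ∀ α ∈ Set.Ioo (0 : ℝ) (1 / 2),
      ∃ l ∈ Set.Ioo (0 : ℝ) 1,
        l * deriv (Falpha α) l = Falpha α l
        ∧ (∀ l' ∈ Set.Ioo (0 : ℝ) 1,
            l' * deriv (Falpha α) l' = Falpha α l' → l' = l)
        ∧ Cmap α =
            ((l * Real.sqrt (deriv (deriv (Falpha α)) l / Falpha α l)) ^ 2
                + (1 + Falpha α (-l) / Falpha α l) / 2)
              / (2 * (l * Real.sqrt (deriv (deriv (Falpha α)) l / Falpha α l)))) :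
    (Cmap ~[nhdsWithin (1 / 2) (Set.Ioi (1 / 2))]
        fun α : ℝ => 2 / Real.sqrt 3 * (α - 1 / 2))
    ∧ (Cmap ~[nhdsWithin (1 / 2) (Set.Iio (1 / 2))]
        fun α : ℝ => (3 : ℝ) ^ ((3 : ℝ) / 4) / 8 * (1 / 2 - α) ^ (-(1 : ℝ) / 2)) := by
  refine ⟨(isEquivalent_supercritical.mono nhdsWithin_le_nhds).congr_left ?_, ?_⟩
  · filter_upwards [Ioo_mem_nhdsGT (by norm_num : (1 / 2 : ℝ) < 1)] with α hα
    exact (hC_sup α hα).symm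
  have hparam : ∀ α ∈ Ioo (0 : ℝ) (1 / 2), ∃ s ∈ Ioo (0 : ℝ) 1,
      s ^ 3 - 3 * s = 2 * (2 * α - 1) ∧ Cmap α = scalingParam s / √s := by
    intro α hα
    obtain ⟨l, hl, hfix, -, hC⟩ := hC_sub α hα
    obtain ⟨s, hs, rfl⟩ := exists_eq_one_sub_sq hl
    have hD : 2 * α - 1 + √3 ≠ 0 := by linarith [hα.1, three_halves_lt_sqrt_three]
    have hcubic := cubic_of_fixedPoint hD hs.1.le hfix
    exact ⟨s, hs, hcubic, hC.trans (scalingConstant_one_sub_sq hcubic hD hs)⟩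
  choose! s hs using hparam
  exact isEquivalent_of_cubicRoot (s := s) (mem_of_superset (Ioo_mem_nhdsLT (by norm_num)) hs)
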